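/- Let A be a Banach algebra that is a left ideal in its bidual A** (first Arens product), and suppose A** has a left unit element e belonging to the weak left topological center Z̃₁ˡ(A**). Then A is reflexive. -/

import Mathlib

open NormedSpace ContinuousLinearMap

noncomputable section

/-- Shortcut instance (port to current Mathlib): the dual of a real normed space is normed. -/
instance strongDualRealNormedAddCommGroup (X : Type*) [NormedAddCommGroup X] [NormedSpace ℝ X] :
    NormedAddCommGroup (StrongDual ℝ X) :=
  inferInstance

/-- Shortcut instance (port to current Mathlib): the dual of a real normed space is a normed space. -/
instance strongDualRealNormedSpace (X : Type*) [NormedAddCommGroup X] [NormedSpace ℝ X] :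
    NormedSpace ℝ (StrongDual ℝ X) :=
  inferInstance

section Core

variable (X Y Z : Type*)
  [NormedAddCommGroup X] [NormedSpace ℝ X]
  [NormedAddCommGroup Y] [NormedSpace ℝ Y]
  [NormedAddCommGroup Z] [NormedSpace ℝ Z]

/-- The dual (adjoint) map of a continuous linear map. -/
def dualMapCLM (T : X →L[ℝ] Y) : StrongDual ℝ Y →L[ℝ] StrongDual ℝ X :=
  (ContinuousLinearMap.compSL X Y ℝ (RingHom.id ℝ) (RingHom.id ℝ)).flip T

variable {X Y Z}

/-- The adjoint of a continuous bilinear map `m : X × Y → Z`, as a bilinear map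
`Z* × X → Y*`, `⟨adjBil m z' x, y⟩ = ⟨z', m x y⟩`. -/
def adjBil (m : X →L[ℝ] Y →L[ℝ] Z) : StrongDual ℝ Z →L[ℝ] X →L[ℝ] StrongDual ℝ Y :=
  ((ContinuousLinearMap.compSL X (Y →L[ℝ] Z) (StrongDual ℝ Y) (RingHom.id ℝ) (RingHom.id ℝ)).flip m).comp
    (ContinuousLinearMap.compSL Y Z ℝ (RingHom.id ℝ) (RingHom.id ℝ))

/-- The first Arens extension of a continuous bilinear map `X × Y → Z`
to the biduals, `X** × Y** → Z**`. -/
def arensExt (m : X →L[ℝ] Y →L[ℝ] Z) :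
    StrongDual ℝ (StrongDual ℝ X) →L[ℝ] StrongDual ℝ (StrongDual ℝ Y) →L[ℝ] StrongDual ℝ (StrongDual ℝ Z) :=
  adjBil (adjBil (adjBil m))

variable (E : Type*) [NormedAddCommGroup E] [NormedSpace ℝ E]

/-- The weak-* topology on the bidual `E**`, i.e. the topology of pointwise
convergence on `E*`. -/
def weakStarTop : TopologicalSpace (StrongDual ℝ (StrongDual ℝ E)) :=
  ⨅ f : StrongDual ℝ E, TopologicalSpace.induced (fun F => F f) inferInstance

/-- The weak topology on the bidual `E**`, i.e. the topology of pointwise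
convergence on `E***`. -/
def weakTop : TopologicalSpace (StrongDual ℝ (StrongDual ℝ E)) :=
  ⨅ Φ : StrongDual ℝ (StrongDual ℝ (StrongDual ℝ E)), TopologicalSpace.induced (fun F => Φ F) inferInstance

end Core

/-- Shortcut instance (port to current Mathlib): the dual of a real normed algebra is normed. -/
instance strongDualRealNormedAddCommGroupOfRing (X : Type*) [NonUnitalNormedRing X]
    [NormedSpace ℝ X] : NormedAddCommGroup (StrongDual ℝ X) :=
  inferInstance

/-- Shortcut instance (port to current Mathlib): the dual of a real normed algebra is a normed
space. -/
instance strongDualRealNormedSpaceOfRing (X : Type*) [NonUnitalNormedRing X] [NormedSpace ℝ X] :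
    NormedSpace ℝ (StrongDual ℝ X) :=
  inferInstance

section Algebra

variable (A : Type*) [NonUnitalNormedRing A] [NormedSpace ℝ A]
  [IsScalarTower ℝ A A] [SMulCommClass ℝ A A]

/-- The first Arens product on the bidual of a Banach algebra. -/
def arens1 : StrongDual ℝ (StrongDual ℝ A) →L[ℝ] StrongDual ℝ (StrongDual ℝ A) →L[ℝ] StrongDual ℝ (StrongDual ℝ A) :=
  arensExt (ContinuousLinearMap.mul ℝ A)

/-- The second Arens product on the bidual of a Banach algebra. -/
def arens2 (F G : StrongDual ℝ (StrongDual ℝ A)) : StrongDual ℝ (StrongDual ℝ A) :=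
  arensExt ((ContinuousLinearMap.mul ℝ A).flip) G F

/-- The weak left topological center of `A**`: those `F` such that
`G ↦ F □ G` is weak-*-to-weak continuous. -/
def weakLeftCenter : Set (StrongDual ℝ (StrongDual ℝ A)) :=
  { F | ∀ Φ : StrongDual ℝ (StrongDual ℝ (StrongDual ℝ A)),
      @Continuous _ _ (weakStarTop A) _ fun G => Φ (arens1 A F G) }

/-- The left topological center of `A**`: those `F` such that
`G ↦ F □ G` is weak-*-to-weak-* continuous. -/
def leftCenter : Set (StrongDual ℝ (StrongDual ℝ A)) :=
  { F | ∀ f : StrongDual ℝ A,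
      @Continuous _ _ (weakStarTop A) _ fun G => arens1 A F G f }

end Algebra


/-
If `e` is a left unit in `Z̃₁ˡ(A**)`, then every `Φ ∈ A***` satisfies `Φ G = Φ (e □ G)`, so every
functional on `A**` is weak-* continuous, i.e. comes from `A*`. A functional vanishing on the closed
subspace `A ⊆ A**` then comes from `0 ∈ A*`, so by Hahn–Banach nothing lies outside `A`.
-/

open Topology

theorem Submodule.exists_le_ker_strongDual_of_isClosed_of_notMem {E : Type*} [AddCommGroup E]
    [Module ℝ E] [TopologicalSpace E] [IsTopologicalAddGroup E] [ContinuousSMul ℝ E]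
    [LocallyConvexSpace ℝ E] {p : Submodule ℝ E} (hp : IsClosed (p : Set E)) {x : E} (hx : x ∉ p) :
    ∃ f : StrongDual ℝ E, f x ≠ 0 ∧ p ≤ LinearMap.ker (f : E →ₗ[ℝ] ℝ) := by
  obtain ⟨f, u, hfx, hfp⟩ := geometric_hahn_banach_point_closed p.convex hp hx
  have hu : u < 0 := by simpa using hfp 0 p.zero_mem
  -- a functional bounded below on a subspace vanishes on it
  have hvanish : p ≤ LinearMap.ker (f : E →ₗ[ℝ] ℝ) := by
    intro y hy
    rw [LinearMap.mem_ker, coe_coe]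
    by_contra hfy
    have := hfp (((u - 1) / f y) • y) (p.smul_mem _ hy)
    rw [map_smul, smul_eq_mul, div_mul_cancel₀ _ hfy] at this
    linarith
  exact ⟨f, by linarith, hvanish⟩

theorem exists_eq_apply_of_continuous_weakStarTop {E : Type*} [NormedAddCommGroup E]
    [NormedSpace ℝ E] (φ : StrongDual ℝ (StrongDual ℝ (StrongDual ℝ E)))
    (hφ : Continuous[weakStarTop E, _] φ) :
    ∃ f : StrongDual ℝ E, ∀ F : StrongDual ℝ (StrongDual ℝ E), φ F = F f := by
  let ev : StrongDual ℝ E →ₗ[ℝ] StrongDual ℝ (StrongDual ℝ E) →ₗ[ℝ] ℝ :=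
    (coeLM ℝ).comp (inclusionInDoubleDual ℝ (StrongDual ℝ E)).toLinearMap
  have hspan : (φ : StrongDual ℝ (StrongDual ℝ E) →ₗ[ℝ] ℝ) ∈ Submodule.span ℝ (Set.range ev) :=
    (LinearMap.mem_span_iff_continuous _).2 hφ
  rw [← LinearMap.coe_range, Submodule.span_eq] at hspan
  obtain ⟨f, hf⟩ := hspan
  exact ⟨f, fun F => (LinearMap.congr_fun hf F).symm⟩

theorem surjective_inclusionInDoubleDual_of_forall_continuous_weakStarTop {E : Type*}
    [NormedAddCommGroup E] [NormedSpace ℝ E] [CompleteSpace E]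
    (h : ∀ φ : StrongDual ℝ (StrongDual ℝ (StrongDual ℝ E)), Continuous[weakStarTop E, _] φ) :
    Function.Surjective (inclusionInDoubleDual ℝ E) := by
  let J := inclusionInDoubleDual ℝ E
  have hclosed : IsClosed (LinearMap.range J.toLinearMap : Set (StrongDual ℝ (StrongDual ℝ E))) := by
    rw [LinearMap.coe_range]
    exact (inclusionInDoubleDualLi ℝ (E := E)).isometry.isClosedEmbedding.isClosed_range
  intro F
  by_contra hF
  obtain ⟨φ, hφF, hφJ⟩ := Submodule.exists_le_ker_strongDual_of_isClosed_of_notMem hclosed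
    (fun ⟨a, ha⟩ => hF ⟨a, ha⟩)
  obtain ⟨f, hf⟩ := exists_eq_apply_of_continuous_weakStarTop φ (h φ)
  have hf0 : f = 0 := ext fun a => by simpa [J, hf] using hφJ ⟨a, rfl⟩
  exact hφF (by rw [hf, hf0, map_zero])

theorem continuous_weakStarTop_of_leftUnit_mem_weakLeftCenter (A : Type*) [NonUnitalNormedRing A]
    [NormedSpace ℝ A] [IsScalarTower ℝ A A] [SMulCommClass ℝ A A] {e : StrongDual ℝ (StrongDual ℝ A)}
    (hunit : ∀ F : StrongDual ℝ (StrongDual ℝ A), arens1 A e F = F) (he : e ∈ weakLeftCenter A)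
    (φ : StrongDual ℝ (StrongDual ℝ (StrongDual ℝ A))) :
    Continuous[weakStarTop A, _] φ := by
  simpa only [hunit] using he φ

theorem stmt4_general (A : Type*) [NonUnitalNormedRing A] [NormedSpace ℝ A]
    [IsScalarTower ℝ A A] [SMulCommClass ℝ A A] [CompleteSpace A]
    (e : StrongDual ℝ (StrongDual ℝ A))
    (hunit : ∀ F : StrongDual ℝ (StrongDual ℝ A), arens1 A e F = F)
    (he : e ∈ weakLeftCenter A) :
    Function.Surjective (inclusionInDoubleDual ℝ A) :=
  surjective_inclusionInDoubleDual_of_forall_continuous_weakStarTop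
    (continuous_weakStarTop_of_leftUnit_mem_weakLeftCenter A hunit he)

/-- If `A` is a left ideal in `A**` and `A**` has a left unit belonging
to the weak left topological center, then `A` is reflexive. -/
theorem stmt4 (A : Type*) [NonUnitalNormedRing A] [NormedSpace ℝ A]
    [IsScalarTower ℝ A A] [SMulCommClass ℝ A A] [CompleteSpace A]
    (hideal : ∀ (a : A) (F : StrongDual ℝ (StrongDual ℝ A)),
      arens1 A (inclusionInDoubleDual ℝ A a) F ∈ Set.range (inclusionInDoubleDual ℝ A))
    (e : StrongDual ℝ (StrongDual ℝ A))
    (hunit : ∀ F : StrongDual ℝ (StrongDual ℝ A), arens1 A e F = F)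
    (he : e ∈ weakLeftCenter A) :
    Function.Surjective (inclusionInDoubleDual ℝ A) :=
  stmt4_general A e hunit he

end
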